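/- Let E be a nontrivial finite-dimensional real inner product space and ψ : E → ℝ a differentiable, strictly convex function which is superlinear, i.e. ψ(y)/‖y‖ → ∞ as ‖y‖ → ∞. Then the gradient map ∇ψ : E → E is a bijection. (Bijectivity of the Legendre map of a Tonelli Lagrangian.) -/
import Mathlib

open Filter Set InnerProductSpace

local notation "⟪" x ", " y "⟫" => @inner ℝ _ _ x y

/-- First-order condition for a convex differentiable function. -/
lemma tonelli_first_order_le
    {E : Type*} [NormedAddCommGroup E] [InnerProductSpace ℝ E] [CompleteSpace E]
    (ψ : E → ℝ) (hdiff : Differentiable ℝ ψ) (hconv : ConvexOn ℝ Set.univ ψ)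
    (x y : E) : ⟪gradient ψ x, y - x⟫ ≤ ψ y - ψ x := by
  set g : ℝ → ℝ := ψ ∘ (AffineMap.lineMap x y) with hg
  have hgc : ConvexOn ℝ Set.univ g := by
    have := hconv.comp_affineMap (AffineMap.lineMap x y)
    simpa using this
  have hline : ∀ t : ℝ, AffineMap.lineMap x y t = x + t • (y - x) := by
    intro t
    simp [AffineMap.lineMap_apply]
    abel
  have hlineDeriv : HasDerivAt (fun t : ℝ => AffineMap.lineMap x y t) (y - x) 0 := by
    have h : HasDerivAt (fun t : ℝ => x + t • (y - x)) (y - x) 0 := by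
      simpa using (((hasDerivAt_id (0 : ℝ)).smul_const (y - x)).const_add x)
    refine h.congr_of_eventuallyEq ?_
    filter_upwards with t using (hline t)
  have hgderiv : HasDerivAt g ⟪gradient ψ x, y - x⟫ 0 := by
    have h0 : (AffineMap.lineMap x y : ℝ → E) 0 = x := by simp [hline]
    have := (hdiff ((AffineMap.lineMap x y : ℝ → E) 0)).hasFDerivAt.comp_hasDerivAt 0 hlineDeriv
    rw [h0] at this
    have heq : fderiv ℝ ψ x (y - x) = ⟪gradient ψ x, y - x⟫ := by
      rw [← InnerProductSpace.toDual_apply_apply, gradient, LinearIsometryEquiv.apply_symm_apply]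
    rw [← heq]
    exact this
  have := hgc.le_slope_of_hasDerivAt (Set.mem_univ (0 : ℝ)) (Set.mem_univ (1 : ℝ))
    one_pos hgderiv
  have hs : slope g 0 1 = ψ y - ψ x := by
    rw [slope_def_field]
    have h0 : g 0 = ψ x := by simp [hg, hline]
    have h1 : g 1 = ψ y := by simp [hg, hline]
    rw [h0, h1]
    ring
  rw [hs] at this
  exact this

/-- Strict first-order condition for a strictly convex differentiable function. -/
lemma tonelli_first_order_lt
    {E : Type*} [NormedAddCommGroup E] [InnerProductSpace ℝ E] [CompleteSpace E]
    (ψ : E → ℝ) (hdiff : Differentiable ℝ ψ) (hconv : StrictConvexOn ℝ Set.univ ψ)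
    {x y : E} (hxy : x ≠ y) : ⟪gradient ψ x, y - x⟫ < ψ y - ψ x := by
  set m : E := (2⁻¹ : ℝ) • x + (2⁻¹ : ℝ) • y with hm
  have hmid : ψ m < 2⁻¹ * ψ x + 2⁻¹ * ψ y := by
    have := hconv.2 (Set.mem_univ x) (Set.mem_univ y) hxy
      (by norm_num : (0:ℝ) < 2⁻¹) (by norm_num : (0:ℝ) < 2⁻¹) (by norm_num)
    simpa [smul_eq_mul] using this
  have hle := tonelli_first_order_le ψ hdiff hconv.convexOn x m
  have hsub : m - x = (2⁻¹ : ℝ) • (y - x) := by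
    rw [hm]; module
  rw [hsub, real_inner_smul_right] at hle
  linarith

/-- Bijectivity of the Legendre map of a Tonelli Lagrangian: on a nontrivial
finite-dimensional real inner product space, the gradient of a differentiable,
strictly convex, superlinear function is a bijection. -/
theorem tonelli_legendre_bijective
    {E : Type*} [NormedAddCommGroup E] [InnerProductSpace ℝ E]
    [FiniteDimensional ℝ E] [Nontrivial E]
    (ψ : E → ℝ)
    (hdiff : Differentiable ℝ ψ)
    (hconv : StrictConvexOn ℝ Set.univ ψ)
    (hsuper : Filter.Tendsto (fun y : E => ψ y / ‖y‖)
      (Filter.comap (fun y : E => ‖y‖) Filter.atTop) Filter.atTop) :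
    Function.Bijective (gradient ψ) := by
  constructor
  · -- injectivity
    intro a b hab
    by_contra hne
    have h1 := tonelli_first_order_lt ψ hdiff hconv hne
    have h2 := tonelli_first_order_lt ψ hdiff hconv (Ne.symm hne)
    rw [hab] at h1
    have h3 : ⟪gradient ψ b, a - b⟫ = -⟪gradient ψ b, b - a⟫ := by
      rw [← inner_neg_right, neg_sub]
    rw [h3] at h2
    linarith
  · -- surjectivity
    intro p
    set f : E → ℝ := fun y => ψ y - ⟪p, y⟫ with hf
    have hF : ∀ y : E, HasFDerivAt f (fderiv ℝ ψ y - innerSL ℝ p) y := fun y =>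
      (hdiff y).hasFDerivAt.sub (innerSL ℝ p).hasFDerivAt
    have hfc : Continuous f := Differentiable.continuous (fun y => (hF y).differentiableAt)
    -- coercivity
    have hco : Tendsto f (comap (fun y : E => ‖y‖) atTop) atTop := by
      rw [tendsto_atTop]
      intro M
      have hev1 : ∀ᶠ y : E in comap (fun y : E => ‖y‖) atTop,
          ‖p‖ + max M 0 + 1 ≤ ψ y / ‖y‖ := hsuper.eventually (eventually_ge_atTop _)
      have hev2 : ∀ᶠ y : E in comap (fun y : E => ‖y‖) atTop, 1 ≤ ‖y‖ :=
        tendsto_comap.eventually (eventually_ge_atTop 1)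
      filter_upwards [hev1, hev2] with y h1 h2
      have hy0 : (0 : ℝ) < ‖y‖ := lt_of_lt_of_le one_pos h2
      have hpsi : (‖p‖ + max M 0 + 1) * ‖y‖ ≤ ψ y := (le_div_iff₀ hy0).mp h1
      have hip : ⟪p, y⟫ ≤ ‖p‖ * ‖y‖ := real_inner_le_norm p y
      have hmax : M ≤ max M 0 := le_max_left M 0
      have hmax0 : (0 : ℝ) ≤ max M 0 := le_max_right M 0
      have hmul : (max M 0 + 1) * 1 ≤ (max M 0 + 1) * ‖y‖ :=
        mul_le_mul_of_nonneg_left h2 (by linarith)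
      have : f y = ψ y - ⟪p, y⟫ := rfl
      nlinarith
    have hco' : Tendsto f (cocompact E) atTop :=
      hco.mono_left (Filter.tendsto_iff_comap.mp tendsto_norm_cocompact_atTop)
    obtain ⟨a, ha⟩ := hfc.exists_forall_le hco'
    have hlmin : IsLocalMin f a := Filter.Eventually.of_forall ha
    have h0 : fderiv ℝ f a = 0 := hlmin.fderiv_eq_zero
    rw [(hF a).fderiv] at h0
    have heq : fderiv ℝ ψ a = innerSL ℝ p := by
      rwa [sub_eq_zero] at h0
    refine ⟨a, ?_⟩
    have htd : InnerProductSpace.toDual ℝ E p = innerSL ℝ p := by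
      ext y
      simp [InnerProductSpace.toDual_apply_apply]
    show (InnerProductSpace.toDual ℝ E).symm (fderiv ℝ ψ a) = p
    rw [heq, ← htd, LinearIsometryEquiv.symm_apply_apply]
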